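/- For c > 0 and b ≠ 0, with τ(t) = log(1+2bct), the curve σ(t) = ((√(1+2bct)/b)(bu cos(τ(t)/(2c)) + (a−bcu) sin(τ(t)/(2c))), v + τ(t)/(2c)), defined on {t : 1+2bct > 0}, satisfies the geodesic equations ẍ¹ + (1+c²)x¹(ẋ²)² = 0, ẍ² + 2c(ẋ²)² = 0 of M(c), with σ(0)=(u,v) and σ'(0)=(a,b). -/

import Mathlib

/-!
Write `g = 1 + 2bct` and `θ = log g / (2c)`, so that `θ' = b / g`. The second coordinate is
`v + θ`, with velocity `b / g` and acceleration `-2b²c / g² = -2c (b / g)²`. The first coordinate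
is `g^{1/2} S(θ)` for a solution `S = A cos + B sin` of `S'' = -S`. Differentiating `g^p S(θ)` gives
`b g^{p-1} (2pc S + S')(θ)`, again a power of `g` times a sinusoid, so two derivatives give
`b² g^{-3/2} (-c² S - c S' + c S' + S'')(θ) = -(1 + c²) b² g^{-3/2} S(θ)`, which is exactly
`-(1 + c²) x¹ (ẋ²)²`.
-/

open Real

/-- `τ(t) = log(1+2bct)`. -/
noncomputable def τ (b c t : ℝ) : ℝ := Real.log (1 + 2 * b * c * t)

/-- The candidate geodesic of `M(c)` with initial position `(u,v)` and initial
velocity `(a,b)`, for `b ≠ 0`. -/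
noncomputable def σ (c u v a b : ℝ) : ℝ → ℝ × ℝ := fun t =>
  ((Real.sqrt (1 + 2 * b * c * t) / b) *
      (b * u * Real.cos (τ b c t / (2 * c))
        + (a - b * c * u) * Real.sin (τ b c t / (2 * c))),
    v + τ b c t / (2 * c))

noncomputable def sinusoid (A B θ : ℝ) : ℝ := A * cos θ + B * sin θ

lemma hasDerivAt_sinusoid (A B θ : ℝ) : HasDerivAt (sinusoid A B) (sinusoid B (-A) θ) θ := by
  have h : HasDerivAt (fun y => A * cos y + B * sin y) (A * -sin θ + B * cos θ) θ :=
    ((hasDerivAt_cos θ).const_mul A).add ((hasDerivAt_sin θ).const_mul B)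
  exact h.congr_deriv (by simp only [sinusoid]; ring)

lemma hasDerivAt_one_add_mul (k t : ℝ) : HasDerivAt (fun s => 1 + k * s) k t := by
  simpa using ((hasDerivAt_id' t).const_mul k).const_add 1

lemma eventually_one_add_mul_pos {k t : ℝ} (ht : 0 < 1 + k * t) :
    ∀ᶠ s in nhds t, 0 < 1 + k * s :=
  continuousAt_const.eventually_lt (by fun_prop) ht

lemma deriv_deriv_eq_of_eventually_hasDerivAt {f f' : ℝ → ℝ} {t f'' : ℝ}
    (hf : ∀ᶠ s in nhds t, HasDerivAt f (f' s) s) (hf' : HasDerivAt f' f'' t) :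
    deriv (deriv f) t = f'' := by
  have hderiv : deriv f =ᶠ[nhds t] f' := hf.mono fun s hs => hs.deriv
  rw [hderiv.deriv_eq, hf'.deriv]

section Phase

variable {b c t : ℝ}

lemma hasDerivAt_τ_div (hc : c ≠ 0) (ht : 0 < 1 + 2 * b * c * t) :
    HasDerivAt (fun s => τ b c s / (2 * c)) (b / (1 + 2 * b * c * t)) t := by
  have h := ((hasDerivAt_one_add_mul (2 * b * c) t).log ht.ne').div_const (2 * c)
  exact h.congr_deriv (by field_simp)

lemma hasDerivAt_rpow_mul_sinusoid (p A B : ℝ) (hc : c ≠ 0) (ht : 0 < 1 + 2 * b * c * t) :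
    HasDerivAt (fun s => (1 + 2 * b * c * s) ^ p * sinusoid A B (τ b c s / (2 * c)))
      (b * ((1 + 2 * b * c * t) ^ (p - 1) *
        sinusoid (2 * p * c * A + B) (2 * p * c * B - A) (τ b c t / (2 * c)))) t := by
  have hg := (hasDerivAt_one_add_mul (2 * b * c) t).rpow_const (p := p) (Or.inl ht.ne')
  have hH := (hasDerivAt_sinusoid A B _).comp t (hasDerivAt_τ_div hc ht)
  refine (hg.mul hH).congr_deriv ?_
  simp only [Function.comp_apply, sinusoid, Real.rpow_sub_one ht.ne']
  field_simp
  ring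

end Phase

section Geodesic

variable {c u v a b : ℝ}

lemma σ_fst_eq (hb : b ≠ 0) :
    (fun s => (σ c u v a b s).1) = fun s => (1 + 2 * b * c * s) ^ (1 / 2 : ℝ) *
      sinusoid u ((a - b * c * u) / b) (τ b c s / (2 * c)) := by
  funext s
  simp only [σ, sinusoid, ← Real.sqrt_eq_rpow]
  field_simp

lemma hasDerivAt_σ_snd (hc : c ≠ 0) {t : ℝ} (ht : 0 < 1 + 2 * b * c * t) :
    HasDerivAt (fun s => (σ c u v a b s).2) (b / (1 + 2 * b * c * t)) t :=
  (hasDerivAt_τ_div hc ht).const_add v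

lemma σ_fst_geodesic (hc : c ≠ 0) (hb : b ≠ 0) {t : ℝ} (ht : 0 < 1 + 2 * b * c * t) :
    deriv (deriv fun s => (σ c u v a b s).1) t
      + (1 + c ^ 2) * (σ c u v a b t).1 * (deriv (fun s => (σ c u v a b s).2) t) ^ 2 = 0 := by
  have hx1 := congrFun (σ_fst_eq (c := c) (u := u) (v := v) (a := a) hb) t
  rw [σ_fst_eq hb, hx1, (hasDerivAt_σ_snd hc ht).deriv,
    deriv_deriv_eq_of_eventually_hasDerivAt
      ((eventually_one_add_mul_pos ht).mono fun s hs =>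
        hasDerivAt_rpow_mul_sinusoid (1 / 2) _ _ hc hs)
      ((hasDerivAt_rpow_mul_sinusoid (1 / 2 - 1) _ _ hc ht).const_mul b)]
  have hpow : (1 + 2 * b * c * t) ^ (1 / 2 : ℝ)
      = (1 + 2 * b * c * t) ^ (1 / 2 - 1 - 1 : ℝ) * (1 + 2 * b * c * t) ^ 2 := by
    rw [← Real.rpow_natCast, ← Real.rpow_add ht]; norm_num
  rw [hpow]
  generalize (1 + 2 * b * c * t) ^ (1 / 2 - 1 - 1 : ℝ) = w
  generalize τ b c t / (2 * c) = θ
  have hg : 1 + 2 * b * c * t ≠ 0 := ht.ne'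
  generalize 1 + 2 * b * c * t = g at hg ⊢
  simp only [sinusoid]
  field_simp
  ring

lemma σ_snd_geodesic (hc : c ≠ 0) {t : ℝ} (ht : 0 < 1 + 2 * b * c * t) :
    deriv (deriv fun s => (σ c u v a b s).2) t
      + 2 * c * (deriv (fun s => (σ c u v a b s).2) t) ^ 2 = 0 := by
  rw [deriv_deriv_eq_of_eventually_hasDerivAt
      ((eventually_one_add_mul_pos ht).mono fun s hs => hasDerivAt_σ_snd hc hs)
      ((hasDerivAt_const t b).div (hasDerivAt_one_add_mul (2 * b * c) t) ht.ne'),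
    (hasDerivAt_σ_snd hc ht).deriv]
  field_simp
  ring

lemma σ_zero (hb : b ≠ 0) : σ c u v a b 0 = (u, v) := by
  simp only [σ, τ, mul_zero, add_zero, sqrt_one, log_one, zero_div, cos_zero, sin_zero, mul_one,
    Prod.mk.injEq, and_true]
  field_simp

lemma hasDerivAt_σ_zero (hc : c ≠ 0) (hb : b ≠ 0) : HasDerivAt (σ c u v a b) (a, b) 0 := by
  have h0 : (0 : ℝ) < 1 + 2 * b * c * 0 := by norm_num
  have hx1 := hasDerivAt_rpow_mul_sinusoid (1 / 2) u ((a - b * c * u) / b) hc h0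
  rw [← σ_fst_eq (v := v) hb] at hx1
  refine (hx1.prodMk (hasDerivAt_σ_snd (u := u) (v := v) (a := a) hc h0)).congr_deriv ?_
  simp only [sinusoid, τ, mul_zero, add_zero, one_rpow, log_one, zero_div, cos_zero, sin_zero,
    mul_one, div_one, Prod.mk.injEq, and_true]
  field_simp
  ring

end Geodesic

/-- for `c > 0` and `b ≠ 0`, the curve `σ` satisfies the geodesic
equations `ẍ¹ + (1+c²)x¹(ẋ²)² = 0`, `ẍ² + 2c(ẋ²)² = 0` of `M(c)` on
`{t : 1+2bct > 0}`, with `σ(0) = (u,v)` and `σ'(0) = (a,b)`. -/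
theorem Mc_geodesic (c u v a b : ℝ) (hc : 0 < c) (hb : b ≠ 0) :
    (∀ t : ℝ, 0 < 1 + 2 * b * c * t →
      deriv (deriv fun s => (σ c u v a b s).1) t
          + (1 + c ^ 2) * (σ c u v a b t).1 *
              (deriv (fun s => (σ c u v a b s).2) t) ^ 2 = 0 ∧
      deriv (deriv fun s => (σ c u v a b s).2) t
          + 2 * c * (deriv (fun s => (σ c u v a b s).2) t) ^ 2 = 0) ∧
    σ c u v a b 0 = (u, v) ∧ deriv (σ c u v a b) 0 = (a, b) :=
  ⟨fun _ ht => ⟨σ_fst_geodesic hc.ne' hb ht, σ_snd_geodesic hc.ne' ht⟩,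
    σ_zero hb, (hasDerivAt_σ_zero hc.ne' hb).deriv⟩
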